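/- arXiv:1511.07534 — 2 statements merged into one kernel-verified Lean document; each statement's English description precedes it below -/
import Mathlib

section
/- Let F(z) = Σ_{n≥0} f(n) z^n with f : ℕ → ℝ nonnegative, and suppose the partial sums satisfy Σ_{n≤N} f(n) ≍ N^β (log N)^m as N → ∞ for some β ≥ 0 and integer m ≥ 0 (i.e., bounded above and below by positive constant multiples). Then for every ε > 0, as z → 1⁻ along (0,1): (1−z)^{−(β−ε)} ≤ F(z) ≤ (1−z)^{−(β+ε)} eventually. -/
open Filter Real

/-!
Since the coefficients of `F(z)/(1-z)` are the partial sums `S N = ∑_{n ≤ N} f n`,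
`F(z) = (1-z) ∑ S N z^N`. For the upper bound, `S N ≤ A + c N^γ` with `γ = β + ε/2` (the
logarithm is absorbed by `N^(ε/2)`), and `∑ n^γ z^n ≲ (1-z)^(-(γ+1))` because `n^γ q^n` is bounded
by `(γ/(1-q))^γ`. For the lower bound, `f ≥ 0` gives `F(z) ≥ z^N S N` for every `N`; at
`N ≈ 1/(2(1-z))` Bernoulli's inequality keeps `z^N ≥ 1/2`, while `S N ≳ (1-z)^(-β)`.
All constants are then absorbed by the slack `ε` in the exponents.
-/

open Finset Topology

theorem rpow_le_mul_exp {γ s x : ℝ} (hγ : 0 < γ) (hs : 0 < s) (hx : 0 ≤ x) :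
    x ^ γ ≤ (γ / s) ^ γ * exp (s * x) := by
  have hle : s * x / γ ≤ exp (s * x / γ) := by linarith [add_one_le_exp (s * x / γ)]
  calc x ^ γ = (γ / s) ^ γ * (s * x / γ) ^ γ := by
        rw [← mul_rpow (by positivity) (by positivity)]
        congr 1
        field_simp
    _ ≤ (γ / s) ^ γ * exp (s * x / γ) ^ γ := by gcongr
    _ = (γ / s) ^ γ * exp (s * x) := by rw [← exp_mul, div_mul_cancel₀ _ hγ.ne']

theorem rpow_mul_pow_le {γ q : ℝ} (hγ : 0 < γ) (hq0 : 0 ≤ q) (hq1 : q < 1) (n : ℕ) :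
    (n : ℝ) ^ γ * q ^ n ≤ (γ / (1 - q)) ^ γ := by
  have hq : q ^ n ≤ exp (-((1 - q) * n)) := by
    calc q ^ n ≤ exp (-(1 - q)) ^ n := by
          gcongr
          linarith [add_one_le_exp (-(1 - q))]
      _ = exp (-((1 - q) * n)) := by rw [← exp_nat_mul]; ring_nf
  calc (n : ℝ) ^ γ * q ^ n
      ≤ (γ / (1 - q)) ^ γ * exp ((1 - q) * n) * exp (-((1 - q) * n)) := by
        gcongr
        exact rpow_le_mul_exp hγ (by linarith) n.cast_nonneg
    _ = (γ / (1 - q)) ^ γ := by rw [mul_assoc, ← exp_add, add_neg_cancel, exp_zero, mul_one]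

theorem rpow_mul_pow_le_mul_pow {γ z : ℝ} (hγ : 0 < γ) (hz0 : 0 ≤ z) (hz1 : z < 1) (n : ℕ) :
    (n : ℝ) ^ γ * z ^ n ≤ (2 * γ / (1 - z)) ^ γ * ((1 + z) / 2) ^ n := by
  set q := (1 + z) / 2 with hq
  -- AM-GM: one factor `q^n` tames `n^γ`, the other still sums to `2/(1-z)`.
  have hzq : z ≤ q ^ 2 := by nlinarith [sq_nonneg (1 - z)]
  calc (n : ℝ) ^ γ * z ^ n ≤ (n : ℝ) ^ γ * q ^ n * q ^ n := by
        rw [mul_assoc, ← mul_pow, ← sq]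
        gcongr
    _ ≤ (γ / (1 - q)) ^ γ * q ^ n := by
        gcongr
        exact rpow_mul_pow_le hγ (by positivity) (by linarith) n
    _ = (2 * γ / (1 - z)) ^ γ * q ^ n := by
        rw [hq]
        congr 2
        field_simp
        ring

theorem hasSum_sum_range_mul_pow {𝕜 : Type*} [NormedField 𝕜] [CompleteSpace 𝕜] {f : ℕ → 𝕜}
    {z : 𝕜} (hf : Summable fun n ↦ ‖f n * z ^ n‖) (hz : ‖z‖ < 1) :
    HasSum (fun n ↦ (∑ k ∈ range (n + 1), f k) * z ^ n) ((∑' n, f n * z ^ n) * (1 - z)⁻¹) := by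
  have hgeo : Summable fun n ↦ ‖z ^ n‖ := by
    simpa only [norm_pow] using summable_geometric_of_lt_one (norm_nonneg z) hz
  have h := hasSum_sum_range_mul_of_summable_norm hf hgeo
  rw [tsum_geometric_of_norm_lt_one hz] at h
  convert h using 2 with n
  rw [sum_mul]
  refine sum_congr rfl fun k hk ↦ ?_
  rw [mul_assoc, ← pow_add, Nat.add_sub_cancel' (Nat.lt_succ_iff.mp (mem_range.mp hk))]

theorem tsum_mul_pow_le_of_sum_range_le {f : ℕ → ℝ} {A c γ z : ℝ} (hf : ∀ n, 0 ≤ f n)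
    (hc : 0 ≤ c) (hγ : 0 < γ) (hS : ∀ n, ∑ k ∈ range (n + 1), f k ≤ A + c * (n : ℝ) ^ γ)
    (hz0 : 0 ≤ z) (hz1 : z < 1) :
    Summable (fun n ↦ f n * z ^ n) ∧ ∑' n, f n * z ^ n ≤ A + 2 * c * (2 * γ / (1 - z)) ^ γ := by
  set K := (2 * γ / (1 - z)) ^ γ
  have hq0 : 0 ≤ (1 + z) / 2 := by linarith
  have hq1 : (1 + z) / 2 < 1 := by linarith
  have hmajorant : HasSum (fun n ↦ A * z ^ n + c * K * ((1 + z) / 2) ^ n)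
      (A * (1 - z)⁻¹ + c * K * (1 - (1 + z) / 2)⁻¹) :=
    ((hasSum_geometric_of_lt_one hz0 hz1).mul_left A).add
      ((hasSum_geometric_of_lt_one hq0 hq1).mul_left (c * K))
  have hdom : ∀ n, (∑ k ∈ range (n + 1), f k) * z ^ n ≤ A * z ^ n + c * K * ((1 + z) / 2) ^ n := by
    intro n
    calc (∑ k ∈ range (n + 1), f k) * z ^ n ≤ (A + c * (n : ℝ) ^ γ) * z ^ n := by gcongr; exact hS n
      _ = A * z ^ n + c * ((n : ℝ) ^ γ * z ^ n) := by ring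
      _ ≤ A * z ^ n + c * (K * ((1 + z) / 2) ^ n) := by
          have := rpow_mul_pow_le_mul_pow hγ hz0 hz1 n
          gcongr
      _ = A * z ^ n + c * K * ((1 + z) / 2) ^ n := by ring
  have hsum_range : Summable fun n ↦ (∑ k ∈ range (n + 1), f k) * z ^ n :=
    hmajorant.summable.of_nonneg_of_le 
      (fun n ↦ mul_nonneg (sum_nonneg fun k _ ↦ hf k) (by positivity)) hdom
  have hsum : Summable fun n ↦ f n * z ^ n := by
    refine hsum_range.of_nonneg_of_le (fun n ↦ mul_nonneg (hf n) (by positivity)) fun n ↦ ?_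
    gcongr
    exact single_le_sum (fun k _ ↦ hf k) (self_mem_range_succ n)
  refine ⟨hsum, ?_⟩
  have habel := hasSum_sum_range_mul_pow (f := f) (z := z)
    (by simpa only [norm_eq_abs] using hsum.abs) (by rwa [norm_of_nonneg hz0])
  have hle := hasSum_le hdom habel hmajorant
  have ht : 0 < 1 - z := by linarith
  rw [show 1 - (1 + z) / 2 = (1 - z) / 2 by ring] at hle
  have := mul_le_mul_of_nonneg_left hle ht.le
  field_simp at this
  linarith

theorem pow_mul_sum_range_le_tsum {f : ℕ → ℝ} {z : ℝ} (hf : ∀ n, 0 ≤ f n) (hz0 : 0 ≤ z)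
    (hz1 : z ≤ 1) (hsum : Summable fun n ↦ f n * z ^ n) (N : ℕ) :
    z ^ N * ∑ n ∈ range (N + 1), f n ≤ ∑' n, f n * z ^ n := by
  calc z ^ N * ∑ n ∈ range (N + 1), f n = ∑ n ∈ range (N + 1), f n * z ^ N := by
        rw [mul_sum]; simp only [mul_comm]
    _ ≤ ∑ n ∈ range (N + 1), f n * z ^ n := by
        refine sum_le_sum fun n hn ↦ mul_le_mul_of_nonneg_left ?_ (hf n)
        exact pow_le_pow_of_le_one hz0 hz1 (Nat.lt_succ_iff.mp (mem_range.mp hn))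
    _ ≤ ∑' n, f n * z ^ n := hsum.sum_le_tsum _ fun n _ ↦ mul_nonneg (hf n) (pow_nonneg hz0 n)

theorem one_half_le_pow_floor {z : ℝ} (hz0 : 0 ≤ z) (hz1 : z < 1) :
    1 / 2 ≤ z ^ ⌊(1 - z)⁻¹ / 2⌋₊ := by
  set N := ⌊(1 - z)⁻¹ / 2⌋₊
  have ht : 0 < 1 - z := by linarith
  have hN : (N : ℝ) * (1 - z) ≤ 1 / 2 := by
    calc (N : ℝ) * (1 - z) ≤ (1 - z)⁻¹ / 2 * (1 - z) := by
          gcongr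
          exact Nat.floor_le (by positivity)
      _ = 1 / 2 := by field_simp
  linarith [one_add_mul_sub_le_pow (by linarith : (-1 : ℝ) ≤ z) N]

theorem tendsto_inv_one_sub_nhdsLT_one : Tendsto (fun z : ℝ ↦ (1 - z)⁻¹) (𝓝[<] 1) atTop := by
  refine tendsto_inv_nhdsGT_zero.comp (tendsto_nhdsWithin_iff.mpr ⟨?_, ?_⟩)
  · have h : Tendsto (fun z : ℝ ↦ 1 - z) (𝓝 1) (𝓝 (1 - 1)) := tendsto_const_nhds.sub tendsto_id
    simpa using h.mono_left nhdsWithin_le_nhds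
  · filter_upwards [self_mem_nhdsWithin] with z (hz : z < 1)
    exact sub_pos.mpr hz

theorem eventually_const_mul_rpow_le_tsum {f : ℕ → ℝ} {β c : ℝ} (hf : ∀ n, 0 ≤ f n)
    (hβ : 0 ≤ β) (hc : 0 ≤ c)
    (hS : ∀ᶠ N : ℕ in atTop, c * (N : ℝ) ^ β ≤ ∑ n ∈ range (N + 1), f n)
    (hsum : ∀ z ∈ Set.Ioo (0 : ℝ) 1, Summable fun n ↦ f n * z ^ n) :
    ∀ᶠ z in 𝓝[<] 1, c / (2 * 4 ^ β) * ((1 - z)⁻¹) ^ β ≤ ∑' n, f n * z ^ n := by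
  have hu := tendsto_inv_one_sub_nhdsLT_one
  have hN : Tendsto (fun z : ℝ ↦ ⌊(1 - z)⁻¹ / 2⌋₊) (𝓝[<] 1) atTop :=
    tendsto_nat_floor_atTop.comp (hu.atTop_div_const two_pos)
  filter_upwards [hN.eventually hS, hu.eventually (eventually_ge_atTop 4),
    Ioo_mem_nhdsLT zero_lt_one] with z hSN hu4 ⟨hz0, hz1⟩
  set u := (1 - z)⁻¹
  set N := ⌊u / 2⌋₊
  have hNu : u / 4 ≤ N := by linarith [Nat.lt_floor_add_one (u / 2)]
  calc c / (2 * 4 ^ β) * u ^ β = 1 / 2 * (c * (u / 4) ^ β) := by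
        rw [div_rpow (by positivity) (by norm_num)]
        ring
    _ ≤ z ^ N * (c * (N : ℝ) ^ β) := by
        gcongr
        exact one_half_le_pow_floor hz0.le hz1
    _ ≤ z ^ N * ∑ n ∈ range (N + 1), f n := by gcongr
    _ ≤ ∑' n, f n * z ^ n := pow_mul_sum_range_le_tsum hf hz0.le hz1.le (hsum z ⟨hz0, hz1⟩) N

theorem eventually_const_mul_rpow_le_rpow {a b : ℝ} (hab : a < b) (B : ℝ) :
    ∀ᶠ u : ℝ in atTop, B * u ^ a ≤ u ^ b := by
  have h : Tendsto (fun u : ℝ ↦ B * u ^ (-(b - a))) atTop (𝓝 0) := by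
    simpa using (tendsto_rpow_neg_atTop (sub_pos.mpr hab)).const_mul B
  filter_upwards [h.eventually_lt_const zero_lt_one, eventually_gt_atTop 0] with u hu hu0
  calc B * u ^ a = B * u ^ (-(b - a)) * u ^ b := by
        rw [mul_assoc, ← rpow_add hu0]
        ring_nf
    _ ≤ 1 * u ^ b := by gcongr
    _ = u ^ b := one_mul _

theorem eventually_add_const_mul_rpow_le_rpow {a b : ℝ} (hb : 0 < b) (hab : a < b) (A B : ℝ) :
    ∀ᶠ u : ℝ in atTop, A + B * u ^ a ≤ u ^ b := by
  filter_upwards [eventually_const_mul_rpow_le_rpow hb (2 * A),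
    eventually_const_mul_rpow_le_rpow hab (2 * B)] with u h₀ h₁
  rw [rpow_zero, mul_one] at h₀
  linarith

theorem exists_forall_le_add_of_eventually_le {u v : ℕ → ℝ} (hu : Monotone u)
    (hv : ∀ n, 0 ≤ v n) (h : ∀ᶠ n in atTop, u n ≤ v n) : ∃ A, ∀ n, u n ≤ A + v n := by
  obtain ⟨N, hN⟩ := eventually_atTop.mp h
  refine ⟨|u N|, fun n ↦ ?_⟩
  rcases le_total n N with hn | hn
  · linarith [hu hn, le_abs_self (u N), hv n]
  · linarith [hN n hn, abs_nonneg (u N)]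

theorem eventually_log_pow_le_rpow (m : ℕ) {δ : ℝ} (hδ : 0 < δ) :
    ∀ᶠ x : ℝ in atTop, log x ^ m ≤ x ^ δ := by
  filter_upwards [(isLittleO_log_rpow_rpow_atTop (m : ℝ) hδ).bound zero_lt_one,
    eventually_ge_atTop 0] with x hx hx0
  calc log x ^ m ≤ ‖log x ^ (m : ℝ)‖ := by rw [rpow_natCast]; exact le_norm_self _
    _ ≤ 1 * ‖x ^ δ‖ := hx
    _ = x ^ δ := by rw [one_mul, norm_of_nonneg (rpow_nonneg hx0 _)]

/-- if `f ≥ 0` and `∑_{n ≤ N} f n ≍ N^β (log N)^m`, then for every `ε > 0`,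
eventually as `z → 1⁻` along `(0,1)`:
`(1-z)^{-(β-ε)} ≤ F(z) ≤ (1-z)^{-(β+ε)}` where `F z = ∑ f n z^n`. -/
theorem stmt_6 (f : ℕ → ℝ) (hf : ∀ n, 0 ≤ f n) (β : ℝ) (hβ : 0 ≤ β) (m : ℕ)
    (hasymp : ∃ c₁ c₂ : ℝ, 0 < c₁ ∧ 0 < c₂ ∧ ∀ᶠ N : ℕ in atTop,
      c₁ * ((N : ℝ) ^ β * (Real.log N) ^ m) ≤ ∑ n ∈ Finset.range (N + 1), f n ∧
      (∑ n ∈ Finset.range (N + 1), f n) ≤ c₂ * ((N : ℝ) ^ β * (Real.log N) ^ m))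
    (F : ℝ → ℝ) (hF : ∀ z ∈ Set.Ioo (0 : ℝ) 1, F z = ∑' n : ℕ, f n * z ^ n) :
    ∀ ε : ℝ, 0 < ε → ∀ᶠ z in nhdsWithin 1 (Set.Ioo (0 : ℝ) 1),
      (1 - z) ^ (-(β - ε)) ≤ F z ∧ F z ≤ (1 - z) ^ (-(β + ε)) := by
  obtain ⟨c₁, c₂, hc₁, hc₂, hasymp⟩ := hasymp
  intro ε hε
  set γ := β + ε / 2
  have hS_lower : ∀ᶠ N : ℕ in atTop, c₁ * (N : ℝ) ^ β ≤ ∑ n ∈ range (N + 1), f n := by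
    filter_upwards [hasymp, (tendsto_log_atTop.comp tendsto_natCast_atTop_atTop).eventually_ge_atTop 1]
      with N hN hlog
    calc c₁ * (N : ℝ) ^ β ≤ c₁ * ((N : ℝ) ^ β * log N ^ m) := by
          gcongr
          exact le_mul_of_one_le_right (by positivity) (one_le_pow₀ hlog)
      _ ≤ _ := hN.1
  have hS_upper : ∀ᶠ N : ℕ in atTop, ∑ n ∈ range (N + 1), f n ≤ c₂ * (N : ℝ) ^ γ := by
    filter_upwards [hasymp, tendsto_natCast_atTop_atTop.eventually
      (eventually_log_pow_le_rpow m (half_pos hε))] with N hN hlog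
    calc _ ≤ c₂ * ((N : ℝ) ^ β * log N ^ m) := hN.2
      _ ≤ c₂ * ((N : ℝ) ^ β * (N : ℝ) ^ (ε / 2)) := by gcongr
      _ = c₂ * (N : ℝ) ^ γ := by rw [← rpow_add' N.cast_nonneg (by positivity)]
  obtain ⟨A, hA⟩ := exists_forall_le_add_of_eventually_le
    (fun a b hab ↦ sum_le_sum_of_subset_of_nonneg (range_subset_range.mpr (by omega))
      fun n _ _ ↦ hf n) (fun n ↦ by positivity) hS_upper
  have hγ : 0 < γ := by positivity
  have hF_upper (z : ℝ) (hz : z ∈ Set.Ioo 0 1) :=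
    tsum_mul_pow_le_of_sum_range_le hf hc₂.le hγ hA hz.1.le hz.2
  have hIoo : 𝓝[Set.Ioo 0 1] (1 : ℝ) ≤ 𝓝[<] 1 := nhdsWithin_mono _ Set.Ioo_subset_Iio_self
  have hu := tendsto_inv_one_sub_nhdsLT_one.mono_left hIoo
  filter_upwards [self_mem_nhdsWithin,
    hIoo (eventually_const_mul_rpow_le_tsum hf hβ hc₁.le hS_lower fun z hz ↦ (hF_upper z hz).1),
    hu.eventually (eventually_const_mul_rpow_le_rpow (sub_lt_self β hε) (c₁ / (2 * 4 ^ β))⁻¹),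
    hu.eventually (eventually_add_const_mul_rpow_le_rpow (a := γ) (b := β + ε) (by positivity)
      (by simp only [γ]; linarith) A (2 * c₂ * (2 * γ) ^ γ))] with z hz hlower hcmp hcmp'
  have ht : 0 ≤ 1 - z := by linarith [hz.2]
  rw [hF z hz, rpow_neg ht, rpow_neg ht, ← inv_rpow ht, ← inv_rpow ht]
  constructor
  · exact ((inv_mul_le_iff₀ (by positivity)).mp hcmp).trans hlower
  · calc ∑' n, f n * z ^ n ≤ A + 2 * c₂ * (2 * γ / (1 - z)) ^ γ := (hF_upper z hz).2
      _ = A + 2 * c₂ * (2 * γ) ^ γ * (1 - z)⁻¹ ^ γ := by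
          rw [div_eq_mul_inv, mul_rpow (by positivity) (inv_nonneg.mpr ht)]
          ring
      _ ≤ _ := hcmp'
end

section
/- Let k ≥ 2 and let f, g : ℕ → ℤ be k-regular sequences (given by matrix representations). Then the Cauchy convolution h(n) = Σ_{j=0}^{n} f(j) g(n−j) is again k-regular. In particular, taking g ≡ 1 (which is k-regular), the partial-sum sequence n ↦ Σ_{j≤n} f(j) is k-regular. -/
/-!
Write a `k`-regular sequence as `f n = w ⬝ᵥ Φ n` with `Φ (a + k * m) = B a *ᵥ Φ m` for every
digit `a < k`; making this hold also for `a = m = 0` costs one extra coordinate recording whether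
`n = 0`. For two such sequences of vectors, the sums `∑_{i + j + c = n} Φ i ⊗ Ψ j`, indexed also
by a carry `c ∈ {0, 1}`, satisfy a recursion of the same shape: adding `i = a + k i'` and
`j = b + k j'` digitwise, `a + b + c = e + k c'` yields the lowest digit `e` of `n` and passes the
carry `c'` on to `i' + j' + c' = n / k`. Pairing with `w ⊗ w'` at carry `0` gives the Cauchy
product, and the partial sums are the Cauchy product with the constant sequence `1`.
-/

open Matrix

/-- A sequence is `k`-regular if it admits a linear matrix representation over the
base-`k` digits of `n` (least significant digit first). -/
def IsKRegular (k : ℕ) (f : ℕ → ℤ) : Prop :=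
  ∃ d : ℕ, 1 ≤ d ∧ ∃ A : ℕ → Matrix (Fin d) (Fin d) ℤ, ∃ v w : Fin d → ℤ,
    ∀ n : ℕ, f n = w ⬝ᵥ (((Nat.digits k n).map A).prod.mulVec v)

open Finset
open scoped Kronecker

theorem Nat.add_mul_eq_add_mul_iff {k x y x' y' : ℕ} (hx : x < k) (hx' : x' < k) :
    x + k * y = x' + k * y' ↔ x = x' ∧ y = y' := by
  refine ⟨fun h => ?_, fun ⟨hx, hy⟩ => hx ▸ hy ▸ rfl⟩
  have hk : 0 < k := by omega
  obtain ⟨hy, hx⟩ := (Nat.div_mod_unique hk).2 ⟨h, hx⟩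
  obtain ⟨hy', hx'⟩ := (Nat.div_mod_unique hk).2 ⟨rfl, hx'⟩
  exact ⟨hx.symm.trans hx', hy.symm.trans hy'⟩

theorem Nat.add_mul_add_add_mul_add_eq_iff {k a b c e i j n : ℕ} (ha : a < k) (hb : b < k)
    (hc : c < 2) (he : e < k) :
    a + k * i + (b + k * j) + c = e + k * n ↔
      a + b + c = e ∧ i + j = n ∨ a + b + c = e + k ∧ i + j + 1 = n := by
  rcases lt_or_ge (a + b + c) k with hs | hs
  · rw [show a + k * i + (b + k * j) + c = a + b + c + k * (i + j) by ring,
      Nat.add_mul_eq_add_mul_iff hs he]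
    omega
  · rw [show a + k * i + (b + k * j) + c = a + b + c - k + k * (i + j + 1) by
        rw [mul_add, mul_add, mul_one]; omega,
      Nat.add_mul_eq_add_mul_iff (by omega) he]
    omega

theorem Finset.sum_range_mul {M : Type*} [AddCommMonoid M] (k n : ℕ) (G : ℕ → M) :
    ∑ i ∈ range (k * n), G i = ∑ a ∈ range k, ∑ i ∈ range n, G (a + k * i) := by
  induction n with
  | zero => simp
  | succ n ih =>
    rw [Nat.mul_succ, sum_range_add, ih]
    simp only [sum_range_succ, sum_add_distrib, add_comm (k * n)]

section CarrySum

variable {M : Type*} [AddCommMonoid M]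

def carrySum (c n : ℕ) (F : ℕ → ℕ → M) : M :=
  ∑ i ∈ range (n + 1), ∑ j ∈ range (n + 1), if i + j + c = n then F i j else 0

theorem carrySum_eq_sum_range {c n m : ℕ} (h : n < m) (F : ℕ → ℕ → M) :
    carrySum c n F = ∑ i ∈ range m, ∑ j ∈ range m, if i + j + c = n then F i j else 0 := by
  have hsub : range (n + 1) ⊆ range m := range_subset_range.2 h
  have hzero : ∀ i j, j ∉ range (n + 1) ∨ i ∉ range (n + 1) →
      (if i + j + c = n then F i j else 0) = 0 := fun i j hij =>
    if_neg (by simp only [mem_range] at hij; omega)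
  calc carrySum c n F
      = ∑ i ∈ range (n + 1), ∑ j ∈ range m, if i + j + c = n then F i j else 0 :=
        sum_congr rfl fun i _ => sum_subset hsub fun j _ hj => hzero i j (.inl hj)
    _ = _ := sum_subset hsub fun i _ hi => sum_eq_zero fun j _ => hzero i j (.inr hi)

theorem carrySum_zero_left (n : ℕ) (F : ℕ → ℕ → M) :
    carrySum 0 n F = ∑ i ∈ range (n + 1), F i (n - i) := by
  refine sum_congr rfl fun i hi => ?_
  have hi : i ≤ n := Nat.lt_succ_iff.1 (mem_range.1 hi)
  have hcond : ∀ j, i + j + 0 = n ↔ n - i = j := by omega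
  simp only [hcond, sum_ite_eq, mem_range, Nat.sub_lt_succ, if_true]

theorem map_carrySum {N F : Type*} [AddCommMonoid N] [FunLike F M N] [AddMonoidHomClass F M N]
    (φ : F) (c n : ℕ) (G : ℕ → ℕ → M) :
    φ (carrySum c n G) = carrySum c n fun i j => φ (G i j) := by
  simp only [carrySum, map_sum, apply_ite φ, map_zero]

theorem carrySum_add_mul {k e : ℕ} (he : e < k) {c : ℕ} (hc : c < 2) (n : ℕ) (F : ℕ → ℕ → M) :
    carrySum c (e + k * n) F = ∑ a ∈ range k, ∑ b ∈ range k, ∑ c' : Fin 2,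
      if a + b + c = e + k * c' then carrySum c' n (fun i j => F (a + k * i) (b + k * j))
      else 0 := by
  rw [carrySum_eq_sum_range (m := k * (n + 1)) (by rw [mul_add, mul_one]; omega)]
  simp_rw [sum_range_mul]
  refine sum_congr rfl fun a ha => (sum_comm).trans (sum_congr rfl fun b hb => ?_)
  rw [mem_range] at ha hb
  simp_rw [Nat.add_mul_add_add_mul_add_eq_iff ha hb hc he, Fin.sum_univ_two]
  simp only [Fin.val_zero, Fin.val_one, mul_zero, add_zero, mul_one, carrySum]
  have hk : k ≠ 0 := by omega
  obtain h | h | ⟨h0, h1⟩ :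
      a + b + c = e ∨ a + b + c = e + k ∨ a + b + c ≠ e ∧ a + b + c ≠ e + k := by
    omega
  · simp [h, hk]
  · simp [h, hk]
  · simp [h0, h1]

end CarrySum

theorem Matrix.kronecker_mulVec_mul {R l m n p : Type*} [CommSemiring R] [Fintype m] [Fintype p]
    (A : Matrix l m R) (B : Matrix n p R) (u : m → R) (v : p → R) :
    (A ⊗ₖ B) *ᵥ (fun x => u x.1 * v x.2) = fun y => (A *ᵥ u) y.1 * (B *ᵥ v) y.2 := by
  ext ⟨i, j⟩
  simp only [mulVec, dotProduct, kronecker_apply, Fintype.sum_prod_type, sum_mul_sum]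
  exact sum_congr rfl fun _ _ => sum_congr rfl fun _ _ => mul_mul_mul_comm ..

theorem Matrix.kronecker_mulVec_apply {R l m n p : Type*} [CommSemiring R] [Fintype m]
    [Fintype p] (A : Matrix l m R) (S : Matrix n p R) (X : m × p → R) (i : l) (c : n) :
    ((A ⊗ₖ S) *ᵥ X) (i, c) = ∑ c', S c c' * (A *ᵥ fun j => X (j, c')) i := by
  simp only [mulVec, dotProduct, kronecker_apply, Fintype.sum_prod_type, mul_sum]
  rw [sum_comm]
  exact sum_congr rfl fun _ _ => sum_congr rfl fun _ _ => by ring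

variable {R σ τ : Type*} [CommSemiring R] [Fintype σ] [Fintype τ]

def IsDigitRecursive (k : ℕ) (B : ℕ → Matrix σ σ R) (Φ : ℕ → σ → R) : Prop :=
  ∀ a < k, ∀ n, Φ (a + k * n) = B a *ᵥ Φ n

theorem IsDigitRecursive.eq_digits_prod_mulVec [DecidableEq σ] {k : ℕ} {B : ℕ → Matrix σ σ R}
    {Φ : ℕ → σ → R} (hk : 1 < k) (h : IsDigitRecursive k B Φ) (n : ℕ) :
    Φ n = ((Nat.digits k n).map B).prod *ᵥ Φ 0 := by
  induction n using Nat.strong_induction_on with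
  | _ n ih =>
    rcases n.eq_zero_or_pos with rfl | hn
    · simp
    rw [Nat.digits_def' hk hn, List.map_cons, List.prod_cons, ← mulVec_mulVec,
      ← ih _ (Nat.div_lt_self hn hk), ← h _ (Nat.mod_lt _ (by omega)), Nat.mod_add_div]

def carryMatrix (k : ℕ) (A : ℕ → Matrix σ σ R) (B : ℕ → Matrix τ τ R) (e : ℕ) :
    Matrix ((σ × τ) × Fin 2) ((σ × τ) × Fin 2) R :=
  ∑ a ∈ range k, ∑ b ∈ range k,
    (A a ⊗ₖ B b) ⊗ₖ of fun c c' : Fin 2 => if a + b + c = e + k * c' then 1 else 0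

def carryConv (Φ : ℕ → σ → R) (Ψ : ℕ → τ → R) (n : ℕ) (x : (σ × τ) × Fin 2) : R :=
  carrySum x.2 n (fun i j (y : σ × τ) => Φ i y.1 * Ψ j y.2) x.1

theorem IsDigitRecursive.carryConv {k : ℕ} {A : ℕ → Matrix σ σ R} {B : ℕ → Matrix τ τ R}
    {Φ : ℕ → σ → R} {Ψ : ℕ → τ → R} (hΦ : IsDigitRecursive k A Φ)
    (hΨ : IsDigitRecursive k B Ψ) :
    IsDigitRecursive k (carryMatrix k A B) (carryConv Φ Ψ) := by
  intro e he n
  ext ⟨z, c⟩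
  simp only [_root_.carryConv, carryMatrix, sum_mulVec, Finset.sum_apply, kronecker_mulVec_apply,
    carrySum_add_mul he c.isLt, of_apply, ite_mul, one_mul, zero_mul]
  refine sum_congr rfl fun a ha => sum_congr rfl fun b hb => sum_congr rfl fun c' _ => ?_
  rw [mem_range] at ha hb
  split_ifs
  · rw [← mulVecLin_apply, map_carrySum]
    simp only [mulVecLin_apply, kronecker_mulVec_mul, ← hΦ a ha, ← hΨ b hb]
  · rfl

theorem dotProduct_carryConv (u : σ → R) (v : τ → R) (Φ : ℕ → σ → R) (Ψ : ℕ → τ → R) (n : ℕ) :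
    (fun x : (σ × τ) × Fin 2 => if x.2 = 0 then u x.1.1 * v x.1.2 else 0) ⬝ᵥ carryConv Φ Ψ n =
      ∑ i ∈ range (n + 1), (u ⬝ᵥ Φ i) * (v ⬝ᵥ Ψ (n - i)) := by
  have htensor : ∀ (x : σ → R) (y : τ → R),
      (fun z : σ × τ => u z.1 * v z.2) ⬝ᵥ (fun z => x z.1 * y z.2) = (u ⬝ᵥ x) * (v ⬝ᵥ y) := by
    intro x y
    simp only [dotProduct, Fintype.sum_prod_type, sum_mul_sum]
    exact sum_congr rfl fun _ _ => sum_congr rfl fun _ _ => mul_mul_mul_comm ..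
  calc _ = (fun z : σ × τ => u z.1 * v z.2) ⬝ᵥ
        carrySum 0 n (fun i j (z : σ × τ) => Φ i z.1 * Ψ j z.2) := by
        simp [dotProduct, Fintype.sum_prod_type, carryConv]
    _ = _ := by
      have h := map_carrySum (dotProductBilin R R fun z : σ × τ => u z.1 * v z.2) 0 n
        (fun i j (z : σ × τ) => Φ i z.1 * Ψ j z.2)
      refine h.trans ?_
      rw [carrySum_zero_left]
      exact sum_congr rfl fun i _ => htensor _ _

theorem isKRegular_of_isDigitRecursive [DecidableEq σ] [Nonempty σ] {k : ℕ} {f : ℕ → ℤ}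
    {B : ℕ → Matrix σ σ ℤ} {Φ : ℕ → σ → ℤ} (hk : 1 < k) (h : IsDigitRecursive k B Φ)
    (w : σ → ℤ) (hf : ∀ n, f n = w ⬝ᵥ Φ n) : IsKRegular k f := by
  let e := Fintype.equivFin σ
  refine ⟨Fintype.card σ, Fintype.card_pos, fun a => reindex e e (B a), Φ 0 ∘ e.symm,
    w ∘ e.symm, fun n => ?_⟩
  have hprod : ∀ l : List ℕ, (l.map fun a => reindex e e (B a)).prod = reindex e e (l.map B).prod :=
    fun l => by rw [← coe_reindexAlgEquiv ℤ ℤ, map_list_prod, List.map_map]; rfl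
  rw [hf, h.eq_digits_prod_mulVec hk, hprod, reindex_apply, submatrix_mulVec_equiv,
    comp_equiv_dotProduct_comp_equiv, Equiv.symm_symm, Function.comp_assoc, e.symm_comp_self,
    Function.comp_id]

theorem IsKRegular.exists_isDigitRecursive {k : ℕ} {f : ℕ → ℤ} (hk : 1 < k)
    (hf : IsKRegular k f) :
    ∃ (σ : Type) (_ : Fintype σ) (_ : DecidableEq σ) (_ : Nonempty σ) (B : ℕ → Matrix σ σ ℤ)
      (Φ : ℕ → σ → ℤ) (w : σ → ℤ), IsDigitRecursive k B Φ ∧ ∀ n, f n = w ⬝ᵥ Φ n := by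
  obtain ⟨d, -, A, v, w, hA⟩ := hf
  -- The corner `v - A 0 *ᵥ v` makes `B 0` fix `Φ 0 = (v, 1)`.
  let P : ℕ → Matrix (Fin d) (Fin d) ℤ := fun n => ((Nat.digits k n).map A).prod
  refine ⟨Fin d ⊕ Unit, inferInstance, inferInstance, inferInstance,
    fun a => fromBlocks (A a) (replicateCol Unit (if a = 0 then v - A a *ᵥ v else 0)) 0
      (of fun _ _ => if a = 0 then 1 else 0),
    fun n => Sum.elim (P n *ᵥ v) fun _ => if n = 0 then 1 else 0, Sum.elim w 0,
    fun a ha m => ?_, fun n => by simp [hA n, sumElim_dotProduct_sumElim, P]⟩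
  rw [fromBlocks_mulVec]
  by_cases h0 : a = 0 ∧ m = 0
  · obtain ⟨rfl, rfl⟩ := h0
    ext (i | i) <;> simp [P, mulVec, dotProduct, replicateCol]
  · have hP : P (a + k * m) = A a * P m := by
      simp only [P, Nat.digits_add k hk a m ha (not_and_or.1 h0), List.map_cons, List.prod_cons]
    rcases not_and_or.1 h0 with ha0 | hm0
    · ext (i | i) <;> simp [hP, ha0, mulVec, dotProduct]
    · have hk0 : k ≠ 0 := by omega
      ext (i | i) <;> simp [hP, hm0, hk0, mulVec, dotProduct]

theorem IsKRegular.cauchyProduct {k : ℕ} {f g : ℕ → ℤ} (hk : 1 < k) (hf : IsKRegular k f)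
    (hg : IsKRegular k g) :
    IsKRegular k fun n => ∑ j ∈ range (n + 1), f j * g (n - j) := by
  obtain ⟨σ, _, _, _, A, Φ, u, hΦ, hfΦ⟩ := hf.exists_isDigitRecursive hk
  obtain ⟨τ, _, _, _, B, Ψ, v, hΨ, hgΨ⟩ := hg.exists_isDigitRecursive hk
  refine isKRegular_of_isDigitRecursive hk (hΦ.carryConv hΨ)
    (fun x => if x.2 = 0 then u x.1.1 * v x.1.2 else 0) fun n => ?_
  simp only [dotProduct_carryConv, hfΦ, hgΨ]

theorem isKRegular_const {k : ℕ} (hk : 1 < k) (c : ℤ) : IsKRegular k fun _ => c :=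
  isKRegular_of_isDigitRecursive (B := fun _ => (1 : Matrix Unit Unit ℤ)) (Φ := fun _ _ => 1) hk
    (fun _ _ _ => (one_mulVec _).symm) (fun _ => c) fun _ => by simp [dotProduct]

/-- the Cauchy convolution of two `k`-regular sequences is `k`-regular;
in particular the partial-sum sequence of a `k`-regular sequence is `k`-regular. -/
theorem stmt_18 (k : ℕ) (hk : 2 ≤ k) (f g : ℕ → ℤ)
    (hf : IsKRegular k f) (hg : IsKRegular k g) :
    IsKRegular k (fun n => ∑ j ∈ Finset.range (n + 1), f j * g (n - j)) ∧
    IsKRegular k (fun n => ∑ j ∈ Finset.range (n + 1), f j) :=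
  ⟨hf.cauchyProduct hk hg, by simpa using hf.cauchyProduct hk (isKRegular_const hk 1)⟩
end
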